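/- Let Γ be a symmetric numerical semigroup with δ := #(ℕ∖Γ) ≥ 1, let q ≥ 1, and take p = 1, a = 0 (so t_0 = (2δ−1)q − 1 and r_0 = qδ(δ−1)). Then there is an isomorphism of graded ℤ[U]-modules ℍ(R_{τ_0},χ_{τ_0})[qδ(δ−1)] ≅ T⁺_0 ⊕ T_0(α_{δ−1})^{⊕q} ⊕ ⊕_{l=1}^{(δ−1)q} T_{(⌊l/q⌋+1)·((l mod q) + l)}(α_{δ−1+⌈l/q⌉})^{⊕2}. -/

import Mathlib

noncomputable section

/-- `T⁺₀ = ℤ[U,U⁻¹]/(U·ℤ[U])`, modeled as finitely supported functions `ℕ → ℤ`;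
`Finsupp.single h 1` represents `U^{-h}`, which is homogeneous of degree `2h`. -/
abbrev TPlus : Type := ℕ →₀ ℤ

/-- The `U`-action on `T⁺₀`: `U · U^{-h} = U^{-(h-1)}` for `h ≥ 1`, `U · U^0 = 0`. -/
def shiftU : TPlus →ₗ[ℤ] TPlus where
  toFun f := Finsupp.comapDomain (· + 1) f (fun a _ b _ h => by simpa using h)
  map_add' f g := by
    ext h
    show (f + g) (h + 1) = f (h + 1) + g (h + 1)
    simp [Finsupp.comapDomain_apply]
  map_smul' c f := by
    ext h
    show (c • f) (h + 1) = c * f (h + 1)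
    simp [Finsupp.comapDomain_apply]

lemma shiftU_apply (f : TPlus) (h : ℕ) : shiftU f h = f (h + 1) := rfl

/-- The submodule `T₀(n) ⊂ T⁺₀` spanned by `U^{-h}`, `0 ≤ h ≤ n-1`. -/
def Tower (n : ℕ) : Submodule ℤ TPlus where
  carrier := {f | ∀ h, n ≤ h → f h = 0}
  add_mem' := by
    intro a b ha hb h hh
    simp [Finsupp.add_apply, ha h hh, hb h hh]
  zero_mem' := by intro h hh; rfl
  smul_mem' := by
    intro c f hf h hh
    simp [Finsupp.smul_apply, hf h hh]

/-- Homogeneity of degree `d` in the shifted module `T⁺_r` or `T_r(n)`: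
the coefficient of `U^{-h}` has degree `2h + r`. -/
def THomog (r d : ℚ) (f : TPlus) : Prop := ∀ h : ℕ, f h ≠ 0 → 2 * (h : ℚ) + r = d

/-- `ℍ(R,χ)` for a graph with vertex set `V`, adjacency `Adj` and grading `χ`:
functions `φ` from vertices to `T⁺₀` with `U · φ(v) = φ(w)` along edges with `χ v < χ w`. -/
def Hmod {V : Type} (Adj : V → V → Prop) (χ : V → ℤ) : Submodule ℤ (V → TPlus) where
  carrier := {φ | ∀ v w, Adj v w → χ v < χ w → shiftU (φ v) = φ w}
  add_mem' := by
    intro a b ha hb v w hvw hχ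
    simp only [Pi.add_apply, map_add, ha v w hvw hχ, hb v w hvw hχ]
  zero_mem' := by intro v w _ _; simp
  smul_mem' := by
    intro c f hf v w hvw hχ
    simp only [Pi.smul_apply, map_smul, hf v w hvw hχ]

lemma mem_Hmod {V : Type} {Adj : V → V → Prop} {χ : V → ℤ} {φ : V → TPlus} :
    φ ∈ Hmod Adj χ ↔ ∀ v w, Adj v w → χ v < χ w → shiftU (φ v) = φ w := Iff.rfl

/-- The (pointwise) `U`-action on `ℍ(R,χ)`. -/
def HU {V : Type} (Adj : V → V → Prop) (χ : V → ℤ) : Hmod Adj χ →ₗ[ℤ] Hmod Adj χ where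
  toFun φ := ⟨fun v => shiftU (φ.1 v), by
    intro v w hvw hχ
    show shiftU (shiftU (φ.1 v)) = shiftU (φ.1 w)
    rw [mem_Hmod.1 φ.2 v w hvw hχ]⟩
  map_add' a b := by
    apply Subtype.ext
    funext v
    simp
  map_smul' c a := by
    apply Subtype.ext
    funext v
    simp

/-- Homogeneity of degree `d` in the shifted module `ℍ(R,χ)[r]`:
`φ` is homogeneous of degree `d` if each `φ(v)` is homogeneous of degree `d - r - 2χ(v)`
in `T⁺₀`. -/
def HHomog {V : Type} (χ : V → ℤ) (r d : ℚ) (φ : V → TPlus) : Prop :=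
  ∀ v, THomog (2 * (χ v : ℚ) + r) d (φ v)

/-- The underlying module of a direct sum `T⁺ ⊕ ⊕_{i ∈ I} T(len i)`. -/
abbrev Targ {I : Type} (len : I → ℕ) : Type := TPlus × ((i : I) → Tower (len i))

def towerShift {n : ℕ} (f : Tower n) : Tower n :=
  ⟨shiftU f.1, by
    intro h hh
    rw [shiftU_apply]
    exact f.2 (h + 1) (by omega)⟩

/-- The `U`-action on `Targ len`. -/
def TargU {I : Type} (len : I → ℕ) : Targ len →ₗ[ℤ] Targ len where
  toFun x := (shiftU x.1, fun i => towerShift (x.2 i))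
  map_add' a b := by
    refine Prod.ext ?_ ?_
    · simp
    · funext i
      apply Subtype.ext
      simp [towerShift]
  map_smul' c a := by
    refine Prod.ext ?_ ?_
    · simp
    · funext i
      apply Subtype.ext
      simp [towerShift]

/-- Homogeneity of degree `d` in `T⁺_{r₀} ⊕ ⊕_{i ∈ I} T_{rI i}(len i)`. -/
def TargHomog {I : Type} {len : I → ℕ} (r₀ : ℚ) (rI : I → ℚ) (d : ℚ) (x : Targ len) : Prop :=
  THomog r₀ d x.1 ∧ ∀ i, THomog (rI i) d ((x.2 i) : TPlus)

end

noncomputable section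

/-- Pre-vertices of the graded root `R_τ` associated with `τ : {0,…,T₀} → ℤ`:
pairs `(i,k)` with `i ≤ T₀` and `τ i ≤ k`, representing the vertex `v_i^k`. -/
def RootVpre (T0 : ℕ) (τ : ℕ → ℤ) : Type := {x : ℕ × ℤ // x.1 ≤ T0 ∧ τ x.1 ≤ x.2}

/-- The identification `v_i^k ∼ v_j^k` whenever `k ≥ τ(l)` for every `l` between `i` and `j`. -/
def RootSetoid (T0 : ℕ) (τ : ℕ → ℤ) : Setoid (RootVpre T0 τ) where
  r x y := x.1.2 = y.1.2 ∧
    ∀ l : ℕ, ((x.1.1 ≤ l ∧ l ≤ y.1.1) ∨ (y.1.1 ≤ l ∧ l ≤ x.1.1)) → τ l ≤ x.1.2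
  iseqv := by
    constructor
    · intro x
      refine ⟨rfl, ?_⟩
      intro l hl
      have : l = x.1.1 := by omega
      rw [this]
      exact x.2.2
    · intro x y h
      refine ⟨h.1.symm, ?_⟩
      intro l hl
      rw [← h.1]
      exact h.2 l (by tauto)
    · intro x y z hxy hyz
      refine ⟨hxy.1.trans hyz.1, ?_⟩
      intro l hl
      have h2 := hxy.2
      have h3 := hyz.2
      rcases (by omega :
          ((x.1.1 ≤ l ∧ l ≤ y.1.1) ∨ (y.1.1 ≤ l ∧ l ≤ x.1.1)) ∨
          ((y.1.1 ≤ l ∧ l ≤ z.1.1) ∨ (z.1.1 ≤ l ∧ l ≤ y.1.1))) with h | h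
      · exact h2 l h
      · rw [hxy.1]
        exact h3 l h

/-- The vertex set of the graded root `R_τ`. -/
def RootV (T0 : ℕ) (τ : ℕ → ℤ) : Type := Quotient (RootSetoid T0 τ)

/-- The grading `χ_τ` of `R_τ`. -/
def rootχ (T0 : ℕ) (τ : ℕ → ℤ) : RootV T0 τ → ℤ :=
  Quotient.lift (fun x : RootVpre T0 τ => x.1.2) (fun _ _ h => h.1)

/-- The vertex `v_i^{k+1}` above `v_i^k`. -/
def rootStep (T0 : ℕ) (τ : ℕ → ℤ) (x : RootVpre T0 τ) : RootVpre T0 τ :=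
  ⟨(x.1.1, x.1.2 + 1), x.2.1, by show τ x.1.1 ≤ x.1.2 + 1; have := x.2.2; omega⟩

/-- The edges of `R_τ`: each `v_i^k` is connected with `v_i^{k+1}`. -/
def rootAdj (T0 : ℕ) (τ : ℕ → ℤ) (u v : RootV T0 τ) : Prop :=
  (∃ x, u = Quotient.mk (RootSetoid T0 τ) x ∧
        v = Quotient.mk (RootSetoid T0 τ) (rootStep T0 τ x)) ∨
  (∃ x, v = Quotient.mk (RootSetoid T0 τ) x ∧
        u = Quotient.mk (RootSetoid T0 τ) (rootStep T0 τ x))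

/-- A vertex of `R_τ` (given `i ≤ T₀` and `τ i ≤ k`). -/
def rootMk (T0 : ℕ) (τ : ℕ → ℤ) (i : ℕ) (k : ℤ) (hi : i ≤ T0) (hk : τ i ≤ k) :
    RootV T0 τ :=
  Quotient.mk (RootSetoid T0 τ) ⟨(i, k), hi, hk⟩

/-- A local minimum point of a χ-graded graph. -/
def IsLocMin {V : Type} (Adj : V → V → Prop) (χ : V → ℤ) (v : V) : Prop :=
  ∀ w, Adj v w → χ v < χ w

end

noncomputable section

/-- The delta-invariant `δ = #(ℕ∖Γ)` of a numerical semigroup `Γ`. -/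
def sdelta (Γ : Set ℕ) : ℕ := Γᶜ.ncard

/-- `α_i = #{k ∈ ℕ∖Γ : k > i}`. -/
def salpha (Γ : Set ℕ) (i : ℕ) : ℕ := {k : ℕ | k ∉ Γ ∧ i < k}.ncard

/-- `τ_a(2t) = t(1−δ) + Σ_{j=0}^{t−1} ⌊(jp+a)/q⌋`. -/
def tauEven (Γ : Set ℕ) (p q a : ℕ) (t : ℕ) : ℤ :=
  (t : ℤ) * (1 - (sdelta Γ : ℤ)) + ∑ j ∈ Finset.range t, (((j * p + a) / q : ℕ) : ℤ)

/-- The function `τ_a : {0,1,…,2t_a+2} → ℤ`: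
`τ_a(2t)` as above and `τ_a(2t+1) = τ_a(2t+2) + α_{⌊(tp+a)/q⌋}`. -/
def tauFun (Γ : Set ℕ) (p q a : ℕ) (n : ℕ) : ℤ :=
  if n % 2 = 0 then tauEven Γ p q a (n / 2)
  else tauEven Γ p q a (n / 2 + 1) + (salpha Γ ((n / 2 * p + a) / q) : ℤ)

/-- `t_a = ⌊((2δ−1)q − a − 1)/p⌋`. -/
def tA (Γ : Set ℕ) (p q a : ℕ) : ℤ :=
  ((2 * (sdelta Γ : ℤ) - 1) * (q : ℤ) - (a : ℤ) - 1) / (p : ℤ)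

/-- The length `T₀ = 2t_a + 2` of the domain of `τ_a`. -/
def rootT0 (Γ : Set ℕ) (p q a : ℕ) : ℕ := (2 * tA Γ p q a + 2).toNat

end

/-! For `p = 1` the function `τ_0` zigzags: its local minima are the even points `2t`, with
`τ_0(2t) = t(1-δ) + ∑_{j<t} ⌊j/q⌋`, smallest at `t = b := (δ-1)q`. An element of `ℍ(R_{τ_0})` is
determined by its values `f_t` at the leaves `v_{2t}^{τ_0(2t)}`, and these are constrained only by
`U^{τ_0(2t+1)-τ_0(2t)} f_t = U^{τ_0(2t+1)-τ_0(2t+2)} f_{t+1}`: the branches of two neighbouring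
leaves merge at the local maximum between them. Walking outward from `b`, this condition says
exactly that `f_outer - U^d f_inner` lies in the tower `T(n)`, where `d` is the difference of the
`τ_0`-values of the two leaves and `n` the depth of the outer leaf below the local maximum. Hence
`f ↦ (f_b, defects)` identifies `ℍ` with `T⁺ ⊕ ⨁ T(n)`. On the right of `b` the links have
`(d, n) = (⌊s/q⌋, α_{δ-1+⌊s/q⌋})`; on the left, the symmetry `α_{δ-1-c} = α_{δ-1+c} + c` of a
symmetric semigroup gives `(⌊u/q⌋ + 1, α_{δ+⌊u/q⌋})`, so the towers come in pairs. The defect at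
a leaf `t` is homogeneous of the leaf's degree `2τ_0(2t) + qδ(δ-1)`: this is `0` on the plateau
`b ≤ t ≤ b + q`, where `τ_0(2t)` is constant, and `(⌊l/q⌋+1)((l mod q)+l)` at the `l`-th leaf
beyond it on either side. -/

lemma shiftU_pow_apply (n : ℕ) (f : TPlus) (h : ℕ) : (shiftU ^ n) f h = f (h + n) := by
  induction n generalizing f h with
  | zero => rfl
  | succ n ih => rw [pow_succ, Module.End.mul_apply, ih, shiftU_apply, add_assoc]

lemma shiftU_shiftU_pow (n : ℕ) (f : TPlus) :
    shiftU ((shiftU ^ n) f) = (shiftU ^ n) (shiftU f) := by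
  ext h
  simp only [shiftU_apply, shiftU_pow_apply, add_right_comm]

lemma sub_shiftU_pow_mem_Tower_iff (f g : TPlus) (n d : ℕ) :
    g - (shiftU ^ d) f ∈ Tower n ↔ (shiftU ^ (n + d)) f = (shiftU ^ n) g := by
  refine ⟨fun hg => Finsupp.ext fun h => ?_, fun hfg h hh => ?_⟩
  · have := hg (h + n) (by omega)
    rw [Finsupp.sub_apply, shiftU_pow_apply, sub_eq_zero] at this
    rw [shiftU_pow_apply, shiftU_pow_apply, ← add_assoc, this]
  · obtain ⟨h, rfl⟩ := Nat.exists_eq_add_of_le' hh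
    have := DFunLike.congr_fun hfg h
    rw [shiftU_pow_apply, shiftU_pow_apply, ← add_assoc] at this
    rw [Finsupp.sub_apply, shiftU_pow_apply, this, sub_self]

namespace THomog

variable {r d : ℚ} {f g : TPlus}

lemma add (hf : THomog r d f) (hg : THomog r d g) : THomog r d (f + g) := fun h hne => by
  by_cases hfh : f h = 0
  · exact hg h (by simpa [hfh] using hne)
  · exact hf h hfh

lemma sub (hf : THomog r d f) (hg : THomog r d g) : THomog r d (f - g) := fun h hne => by
  by_cases hfh : f h = 0
  · exact hg h (by simpa [hfh] using hne)
  · exact hf h hfh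

lemma shiftU_pow (hf : THomog r d f) (n : ℕ) : THomog (r + 2 * n) d ((shiftU ^ n) f) :=
  fun h hne => by
    rw [shiftU_pow_apply] at hne
    have := hf _ hne
    push_cast at this
    linarith

end THomog

section SymmetricSemigroup

open Finset

variable {Γ : Set ℕ} (hfin : Γᶜ.Finite)

include hfin

lemma sdelta_eq_card : sdelta Γ = hfin.toFinset.card := by
  rw [sdelta, Set.ncard_eq_toFinset_card _ hfin]

lemma salpha_eq_card (i : ℕ) : salpha Γ i = (hfin.toFinset.filter (i < ·)).card := by
  rw [salpha, ← Set.ncard_coe_finset]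
  congr 1
  ext k
  simp

variable (hsym : ∀ k : ℕ, k ≤ 2 * sdelta Γ - 1 → (k ∈ Γ ↔ (2 * sdelta Γ - 1 - k) ∉ Γ))

include hsym

/-- `k ↦ 2δ - 1 - k` exchanges the gaps and the elements of `Γ` in `[0, 2δ)`, so `δ` of the
`2δ` numbers there are gaps: all of them. -/
lemma lt_two_mul_sdelta_of_notMem {k : ℕ} (hk : k ∉ Γ) : k < 2 * sdelta Γ := by
  classical
  set δ := sdelta Γ
  have hreflect :
      ((range (2 * δ)).filter (· ∉ Γ)).card = ((range (2 * δ)).filter (· ∈ Γ)).card := by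
    refine card_nbij' (2 * δ - 1 - ·) (2 * δ - 1 - ·) ?_ ?_ ?_ ?_ <;>
      intro a ha <;> simp only [coe_filter, mem_range, Set.mem_ofPred_eq] at ha ⊢
    · exact ⟨by omega, not_not.mp (mt (hsym a (by omega)).mpr ha.2)⟩
    · exact ⟨by omega, (hsym a (by omega)).mp ha.2⟩
    all_goals omega
  have hsplit := card_filter_add_card_filter_not (s := range (2 * δ)) (· ∉ Γ)
  simp only [not_not, card_range] at hsplit
  have hgaps : (range (2 * δ)).filter (· ∉ Γ) = hfin.toFinset :=
    eq_of_subset_of_card_le (fun a ha => by simpa using (mem_filter.mp ha).2)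
      (by rw [← sdelta_eq_card hfin]; omega)
  have hk' : k ∈ (range (2 * δ)).filter (· ∉ Γ) := by rw [hgaps]; simpa using hk
  simpa using (mem_filter.mp hk').1

lemma salpha_add_add_one (hδ1 : 1 ≤ sdelta Γ) (i : ℕ) (hi : i ≤ 2 * sdelta Γ - 2) :
    salpha Γ i + i + 1 = salpha Γ (2 * sdelta Γ - 2 - i) + sdelta Γ := by
  classical
  have hlow : salpha Γ i + ((range (i + 1)).filter (· ∉ Γ)).card = sdelta Γ := by
    rw [salpha_eq_card hfin, sdelta_eq_card hfin, ← card_filter_add_card_filter_not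
      (s := hfin.toFinset) (i < ·)]
    congr 1
    congr 1
    ext k
    simp only [mem_filter, mem_range, Set.Finite.mem_toFinset, Set.mem_compl_iff, not_lt,
      Nat.lt_succ_iff, and_comm]
  have hhigh : salpha Γ (2 * sdelta Γ - 2 - i) = ((range (i + 1)).filter (· ∈ Γ)).card := by
    rw [salpha_eq_card hfin]
    refine card_nbij' (2 * sdelta Γ - 1 - ·) (2 * sdelta Γ - 1 - ·) ?_ ?_ ?_ ?_ <;>
      intro a ha <;>
      simp only [coe_filter, mem_range, Set.Finite.mem_toFinset, Set.mem_compl_iff,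
        Set.mem_ofPred_eq] at ha ⊢
    · have := lt_two_mul_sdelta_of_notMem hfin hsym ha.1
      have h := hsym (2 * sdelta Γ - 1 - a) (by omega)
      rw [show 2 * sdelta Γ - 1 - (2 * sdelta Γ - 1 - a) = a by omega] at h
      exact ⟨by omega, h.mpr ha.1⟩
    · exact ⟨(hsym a (by omega)).mp ha.2, by omega⟩
    · have := lt_two_mul_sdelta_of_notMem hfin hsym ha.1
      omega
    · omega
  have hsplit := card_filter_add_card_filter_not (s := range (i + 1)) (· ∉ Γ)
  simp only [not_not, card_range] at hsplit
  omega

lemma salpha_sub_eq (hδ1 : 1 ≤ sdelta Γ) (c : ℕ) (hc : c ≤ sdelta Γ - 1) :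
    salpha Γ (sdelta Γ - 1 - c) = salpha Γ (sdelta Γ - 1 + c) + c := by
  have h := salpha_add_add_one hfin hsym hδ1 (sdelta Γ - 1 - c) (by omega)
  rw [show 2 * sdelta Γ - 2 - (sdelta Γ - 1 - c) = sdelta Γ - 1 + c by omega] at h
  omega

end SymmetricSemigroup

section ZigzagRoot

variable {T : ℕ} {τ : ℕ → ℤ}

/-- The value at the leaf `v_{2t}^{τ(2t)}`, or `0` when `2t > T`. -/
noncomputable def leafVal (T : ℕ) (τ : ℕ → ℤ) (t : ℕ) : (RootV T τ → TPlus) →ₗ[ℤ] TPlus :=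
  if h : 2 * t ≤ T then LinearMap.proj (rootMk T τ (2 * t) (τ (2 * t)) h le_rfl) else 0

lemma leafVal_apply {t : ℕ} (h : 2 * t ≤ T) (φ : RootV T τ → TPlus) :
    leafVal T τ t φ = φ (rootMk T τ (2 * t) (τ (2 * t)) h le_rfl) := by
  simp [leafVal, h]

lemma leafVal_shiftU (t : ℕ) (φ : RootV T τ → TPlus) :
    leafVal T τ t (fun v => shiftU (φ v)) = shiftU (leafVal T τ t φ) := by
  unfold leafVal
  split_ifs <;> simp

lemma rootMk_eq_rootMk {i j : ℕ} {k : ℤ} {hi : i ≤ T} {hj : j ≤ T} {hki : τ i ≤ k}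
    {hkj : τ j ≤ k} (hbetween : ∀ l, (i ≤ l ∧ l ≤ j) ∨ (j ≤ l ∧ l ≤ i) → τ l ≤ k) :
    rootMk T τ i k hi hki = rootMk T τ j k hj hkj :=
  Quotient.sound ⟨rfl, hbetween⟩

lemma Hmod_apply_rootMk_of_eq_add {φ : RootV T τ → TPlus}
    (hφ : φ ∈ Hmod (rootAdj T τ) (rootχ T τ)) {i : ℕ} {k k' : ℤ} (hi : i ≤ T) (hk : τ i ≤ k)
    (hk' : τ i ≤ k') (n : ℕ) (hkk' : k' = k + n) :
    φ (rootMk T τ i k' hi hk') = (shiftU ^ n) (φ (rootMk T τ i k hi hk)) := by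
  induction n generalizing k' with
  | zero =>
    obtain rfl : k' = k := by simpa using hkk'
    rfl
  | succ n ih =>
    obtain rfl : k' = k + n + 1 := by push_cast at hkk'; omega
    rw [pow_succ', Module.End.mul_apply, ← ih (by omega) rfl]
    refine (mem_Hmod.1 hφ _ _
      (Or.inl ⟨⟨(i, k + n), hi, show τ i ≤ k + n by omega⟩, rfl, rfl⟩) ?_).symm
    show k + n < k + n + 1
    omega

/-- The leaf `t` whose branch contains the vertices `v_i^k`: `i = 2t` or `i = 2t - 1`. -/
def leafIdx (i : ℕ) : ℕ := (i + 1) / 2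

variable {N : ℕ} (hT : T = 2 * N)
  (hzig : ∀ t < N, τ (2 * t) ≤ τ (2 * t + 1) ∧ τ (2 * t + 2) ≤ τ (2 * t + 1))

/-- The compatibility of leaf values: the branches through `2t` and `2t + 2` meet at the level
`τ(2t+1)` of the local maximum between them. -/
def LeafCompat (τ : ℕ → ℤ) (N : ℕ) (f : ℕ → TPlus) : Prop :=
  ∀ t < N, (shiftU ^ (τ (2 * t + 1) - τ (2 * t)).toNat) (f t)
    = (shiftU ^ (τ (2 * t + 1) - τ (2 * t + 2)).toNat) (f (t + 1))

include hT hzig in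
lemma tau_leafIdx_le {i : ℕ} (hi : i ≤ T) {k : ℤ} (hk : τ i ≤ k) :
    τ (2 * leafIdx i) ≤ k ∧ 2 * leafIdx i ≤ T := by
  rcases Nat.even_or_odd' i with ⟨t, rfl | rfl⟩
  · rw [leafIdx, show (2 * t + 1) / 2 = t by omega]
    exact ⟨hk, hi⟩
  · rw [leafIdx, show (2 * t + 1 + 1) / 2 = t + 1 by omega, mul_add, mul_one]
    exact ⟨(hzig t (by omega)).2.trans hk, by omega⟩

include hzig in
lemma LeafCompat.shiftU_pow_eq {f : ℕ → TPlus} (hf : LeafCompat τ N f) {t t' : ℕ}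
    (htt' : t ≤ t') (ht' : t' ≤ N) {k : ℤ}
    (hmax : ∀ s, t ≤ s → s < t' → τ (2 * s + 1) ≤ k) :
    (shiftU ^ (k - τ (2 * t)).toNat) (f t) = (shiftU ^ (k - τ (2 * t')).toNat) (f t') := by
  induction t', htt' using Nat.le_induction with
  | base => rfl
  | succ n hn ih =>
    have hmaxn := hmax n hn (by omega)
    obtain ⟨hup, hdown⟩ := hzig n (by omega)
    rw [ih (by omega) (fun s hs hs' => hmax s hs (by omega)),
      show (k - τ (2 * n)).toNat = (k - τ (2 * n + 1)).toNat + (τ (2 * n + 1) - τ (2 * n)).toNat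
        by omega,
      show (k - τ (2 * (n + 1))).toNat
        = (k - τ (2 * n + 1)).toNat + (τ (2 * n + 1) - τ (2 * n + 2)).toNat by
        rw [show 2 * (n + 1) = 2 * n + 2 by ring]; omega,
      pow_add, pow_add, Module.End.mul_apply, Module.End.mul_apply, hf n (by omega)]

include hT hzig in
lemma LeafCompat.shiftU_pow_leafIdx_eq {f : ℕ → TPlus} (hf : LeafCompat τ N f) {i j : ℕ}
    (hij : i ≤ j) (hj : j ≤ T) {k : ℤ} (hkj : τ j ≤ k)
    (hbetween : ∀ l, i ≤ l → l ≤ j → τ l ≤ k) :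
    (shiftU ^ (k - τ (2 * leafIdx i)).toNat) (f (leafIdx i))
      = (shiftU ^ (k - τ (2 * leafIdx j)).toNat) (f (leafIdx j)) := by
  have hj_leaf := tau_leafIdx_le hT hzig hj hkj
  refine hf.shiftU_pow_eq hzig (by unfold leafIdx; omega) (by omega)
    fun s hs hs' => hbetween _ ?_ ?_ <;> unfold leafIdx at hs hs' <;> omega

noncomputable def ofLeaves (f : ℕ → TPlus) (hf : LeafCompat τ N f) : RootV T τ → TPlus :=
  Quotient.lift
    (fun x : RootVpre T τ => (shiftU ^ (x.1.2 - τ (2 * leafIdx x.1.1)).toNat) (f (leafIdx x.1.1)))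
    (by
      rintro ⟨⟨i, k⟩, hi, hki⟩ ⟨⟨j, k'⟩, hj, hkj⟩ ⟨rfl, hbetween⟩
      rcases le_total i j with h | h
      · exact hf.shiftU_pow_leafIdx_eq hT hzig h hj hkj
          fun l h1 h2 => hbetween l (Or.inl ⟨h1, h2⟩)
      · exact (hf.shiftU_pow_leafIdx_eq hT hzig h hi hki
          fun l h1 h2 => hbetween l (Or.inr ⟨h1, h2⟩)).symm)

lemma ofLeaves_rootMk (f : ℕ → TPlus) (hf : LeafCompat τ N f) {i : ℕ} {k : ℤ} (hi : i ≤ T)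
    (hk : τ i ≤ k) :
    ofLeaves hT hzig f hf (rootMk T τ i k hi hk)
      = (shiftU ^ (k - τ (2 * leafIdx i)).toNat) (f (leafIdx i)) := rfl

lemma ofLeaves_mem (f : ℕ → TPlus) (hf : LeafCompat τ N f) :
    ofLeaves hT hzig f hf ∈ Hmod (rootAdj T τ) (rootχ T τ) := by
  rintro v w (⟨⟨⟨i, k⟩, hi, hk⟩, rfl, rfl⟩ | ⟨⟨⟨i, k⟩, hi, hk⟩, rfl, rfl⟩) hlt
  · dsimp only at hi hk
    have := (tau_leafIdx_le hT hzig hi hk).1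
    change shiftU (ofLeaves hT hzig f hf (rootMk T τ i k hi hk))
      = ofLeaves hT hzig f hf (rootMk T τ i (k + 1) hi (by omega))
    rw [ofLeaves_rootMk, ofLeaves_rootMk, ← Module.End.mul_apply, ← pow_succ', show (k - τ (2 * leafIdx i)).toNat + 1
      = (k + 1 - τ (2 * leafIdx i)).toNat by omega]
  · exact absurd hlt (show ¬ k + 1 < k by omega)

lemma leafVal_ofLeaves (f : ℕ → TPlus) (hf : LeafCompat τ N f) {t : ℕ} (ht : t ≤ N) :
    leafVal T τ t (ofLeaves hT hzig f hf) = f t := by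
  rw [leafVal_apply (by omega), ofLeaves_rootMk]
  simp [leafIdx, show (2 * t + 1) / 2 = t by omega]

include hT hzig in
lemma Hmod_apply_rootMk {φ : RootV T τ → TPlus} (hφ : φ ∈ Hmod (rootAdj T τ) (rootχ T τ))
    {i : ℕ} {k : ℤ} (hi : i ≤ T) (hk : τ i ≤ k) :
    φ (rootMk T τ i k hi hk)
      = (shiftU ^ (k - τ (2 * leafIdx i)).toNat) (leafVal T τ (leafIdx i) φ) := by
  obtain ⟨hkleaf, hleaf⟩ := tau_leafIdx_le hT hzig hi hk
  have hvertex : rootMk T τ i k hi hk = rootMk T τ (2 * leafIdx i) k hleaf hkleaf :=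
    rootMk_eq_rootMk fun l hl => by
      obtain rfl | rfl : l = i ∨ l = 2 * leafIdx i := by unfold leafIdx at hl ⊢; omega
      exacts [hk, hkleaf]
  rw [hvertex, leafVal_apply hleaf]
  exact Hmod_apply_rootMk_of_eq_add hφ hleaf le_rfl hkleaf _ (by omega)

include hT hzig in
lemma leafCompat_leafVal {φ : RootV T τ → TPlus} (hφ : φ ∈ Hmod (rootAdj T τ) (rootχ T τ)) :
    LeafCompat τ N (fun t => leafVal T τ t φ) := by
  intro t ht
  dsimp only
  obtain ⟨hup, hdown⟩ := hzig t ht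
  have hshared : rootMk T τ (2 * t) (τ (2 * t + 1)) (by omega) hup
      = rootMk T τ (2 * t + 2) (τ (2 * t + 1)) (by omega) hdown :=
    rootMk_eq_rootMk fun l hl => by
      obtain rfl | rfl | rfl : l = 2 * t ∨ l = 2 * t + 1 ∨ l = 2 * t + 2 := by omega
      exacts [hup, le_rfl, hdown]
  rw [leafVal_apply (by omega), leafVal_apply (by omega),
    ← Hmod_apply_rootMk_of_eq_add hφ _ le_rfl hup _ (by omega),
    ← Hmod_apply_rootMk_of_eq_add hφ _ le_rfl (by simpa [mul_add] using hdown) _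
      (by simp only [mul_add, mul_one]; omega)]
  exact congrArg φ (hshared.trans (rootMk_eq_rootMk fun l hl => by
    obtain rfl : l = 2 * t + 2 := by omega
    exact hdown))

include hT hzig in
lemma Hmod_ext_leafVal {φ ψ : RootV T τ → TPlus} (hφ : φ ∈ Hmod (rootAdj T τ) (rootχ T τ))
    (hψ : ψ ∈ Hmod (rootAdj T τ) (rootχ T τ))
    (h : ∀ t ≤ N, leafVal T τ t φ = leafVal T τ t ψ) : φ = ψ := by
  funext v
  induction v using Quotient.ind with
  | _ x =>
    obtain ⟨⟨i, k⟩, hi, hk⟩ := x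
    dsimp only at hi hk
    have := (tau_leafIdx_le hT hzig hi hk).2
    change φ (rootMk T τ i k hi hk) = ψ (rootMk T τ i k hi hk)
    rw [Hmod_apply_rootMk hT hzig hφ, Hmod_apply_rootMk hT hzig hψ, h _ (by omega)]

include hT hzig in
lemma HHomog_iff_leafVal {φ : RootV T τ → TPlus} (hφ : φ ∈ Hmod (rootAdj T τ) (rootχ T τ))
    (r d : ℚ) :
    HHomog (rootχ T τ) r d φ ↔ ∀ t ≤ N, THomog (2 * (τ (2 * t) : ℚ) + r) d (leafVal T τ t φ) := by
  refine ⟨fun hφd t ht => ?_, fun hleaves v => ?_⟩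
  · rw [leafVal_apply (by omega)]
    exact hφd _
  · induction v using Quotient.ind with
    | _ x =>
      obtain ⟨⟨i, k⟩, hi, hk⟩ := x
      dsimp only at hi hk
      obtain ⟨hkleaf, hleaf⟩ := tau_leafIdx_le hT hzig hi hk
      change THomog (2 * (k : ℚ) + r) d (φ (rootMk T τ i k hi hk))
      rw [Hmod_apply_rootMk hT hzig hφ]
      convert (hleaves (leafIdx i) (by omega)).shiftU_pow (k - τ (2 * leafIdx i)).toNat using 1
      have : (((k - τ (2 * leafIdx i)).toNat : ℤ) : ℚ) = (k : ℚ) - τ (2 * leafIdx i) := by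
        rw [Int.toNat_of_nonneg (by omega)]
        push_cast
        ring
      push_cast at this ⊢
      linarith

end ZigzagRoot

section Chain

variable (d : ℕ → ℕ)

noncomputable def chainDiff (f : ℕ → TPlus) (s : ℕ) : TPlus := f (s + 1) - (shiftU ^ d s) (f s)

noncomputable def chainRec (y : ℕ → TPlus) (x : TPlus) : ℕ → TPlus
  | 0 => x
  | s + 1 => y s + (shiftU ^ d s) (chainRec y x s)

variable {d}

@[simp]
lemma chainDiff_chainRec (y : ℕ → TPlus) (x : TPlus) (s : ℕ) :
    chainDiff d (chainRec d y x) s = y s := by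
  simp [chainDiff, chainRec]

lemma chainRec_chainDiff {f y : ℕ → TPlus} {L : ℕ} (hy : ∀ s < L, y s = chainDiff d f s) :
    ∀ s ≤ L, chainRec d y (f 0) s = f s := by
  intro s hs
  induction s with
  | zero => rfl
  | succ s ih => rw [chainRec, ih (by omega), hy s (by omega), chainDiff, sub_add_cancel]

lemma chainDiff_congr {f g : ℕ → TPlus} {s : ℕ} (h₀ : f s = g s) (h₁ : f (s + 1) = g (s + 1)) :
    chainDiff d f s = chainDiff d g s := by
  rw [chainDiff, chainDiff, h₀, h₁]

lemma chainDiff_shiftU (f : ℕ → TPlus) (s : ℕ) :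
    chainDiff d (fun s => shiftU (f s)) s = shiftU (chainDiff d f s) := by
  rw [chainDiff, chainDiff, map_sub, shiftU_shiftU_pow]

lemma THomog_chain_iff {c : ℕ → ℚ} (hc : ∀ s, c (s + 1) = c s + 2 * d s) (D : ℚ)
    (f : ℕ → TPlus) (L : ℕ) :
    (∀ s ≤ L, THomog (c s) D (f s))
      ↔ THomog (c 0) D (f 0) ∧ ∀ s < L, THomog (c (s + 1)) D (chainDiff d f s) := by
  refine ⟨fun hf => ⟨hf 0 (Nat.zero_le _), fun s hs => ?_⟩, fun ⟨h₀, hdiff⟩ s hs => ?_⟩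
  · exact (hf (s + 1) hs).sub (hc s ▸ (hf s hs.le).shiftU_pow (d s))
  · induction s with
    | zero => exact h₀
    | succ s ih =>
      rw [← sub_add_cancel (f (s + 1)) ((shiftU ^ d s) (f s))]
      exact (hdiff s hs).add (hc s ▸ (ih (by omega)).shiftU_pow (d s))

end Chain

lemma forall_lt_add_iff_split {P : ℕ → Prop} {b L : ℕ} :
    (∀ t < b + L, P t) ↔ (∀ s < L, P (b + s)) ∧ ∀ u < b, P (b - (u + 1)) := by
  refine ⟨fun h => ⟨fun s hs => h _ (by omega), fun u hu => h _ (by omega)⟩,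
    fun ⟨hright, hleft⟩ t ht => ?_⟩
  rcases le_or_gt b t with hbt | htb
  · obtain ⟨s, rfl⟩ := Nat.exists_eq_add_of_le hbt
    exact hright s (by omega)
  · simpa [show b - (b - (t + 1) + 1) = t by omega] using hleft (b - (t + 1)) (by omega)

lemma forall_le_add_iff_split {P : ℕ → Prop} {b L : ℕ} :
    (∀ t ≤ b + L, P t) ↔ (∀ s ≤ L, P (b + s)) ∧ ∀ u ≤ b, P (b - u) := by
  refine ⟨fun h => ⟨fun s hs => h _ (by omega), fun u hu => h _ (by omega)⟩,
    fun ⟨hright, hleft⟩ t ht => ?_⟩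
  rcases le_or_gt b t with hbt | htb
  · obtain ⟨s, rfl⟩ := Nat.exists_eq_add_of_le hbt
    exact hright s (by omega)
  · simpa [show b - (b - t) = t by omega] using hleft (b - t) (by omega)

section SurgeryTau

open Finset

lemma two_mul_sum_range_div_add_one {q : ℕ} (hq : 0 < q) (n : ℕ) :
    2 * ∑ j ∈ range n, (j / q + 1) = (n / q + 1) * (n % q + n) := by
  induction n with
  | zero => simp
  | succ n ih =>
    rw [sum_range_succ, mul_add, ih]
    obtain ⟨k, r, hr, rfl⟩ : ∃ k r, r < q ∧ n = q * k + r :=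
      ⟨n / q, n % q, Nat.mod_lt _ hq, (Nat.div_add_mod n q).symm⟩
    rcases Nat.lt_or_ge (r + 1) q with hr1 | hr1
    · rw [add_assoc, Nat.mul_add_div hq, Nat.mul_add_div hq, Nat.mul_add_mod, Nat.mul_add_mod,
        Nat.div_eq_of_lt hr, Nat.div_eq_of_lt hr1, Nat.mod_eq_of_lt hr, Nat.mod_eq_of_lt hr1]
      ring
    · obtain rfl : q = r + 1 := by omega
      rw [Nat.mul_add_div hq, Nat.div_eq_of_lt hr, Nat.mul_add_mod, Nat.mod_eq_of_lt hr,
        show (r + 1) * k + r + 1 = (r + 1) * (k + 1) by ring, Nat.mul_div_cancel_left _ hq,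
        Nat.mul_mod_right]
      ring

lemma sum_range_add_div (q n : ℕ) (hq : 0 < q) :
    ∑ j ∈ range (q + n), j / q = ∑ j ∈ range n, (j / q + 1) := by
  rw [sum_range_add, sum_eq_zero fun j hj => Nat.div_eq_of_lt (mem_range.mp hj), zero_add]
  exact sum_congr rfl fun j _ => by rw [add_comm, Nat.add_div_right _ hq]

variable (Γ : Set ℕ) (q : ℕ)

lemma tA_one_zero : tA Γ 1 q 0 = (2 * (sdelta Γ : ℤ) - 1) * q - 1 := by
  simp [tA]

lemma rootT0_one_zero (hδ1 : 1 ≤ sdelta Γ) :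
    rootT0 Γ 1 q 0 = 2 * ((sdelta Γ - 1) * q + (q + (sdelta Γ - 1) * q)) := by
  have h : ((2 * ((sdelta Γ - 1) * q + (q + (sdelta Γ - 1) * q)) : ℕ) : ℤ)
      = 2 * ((2 * (sdelta Γ : ℤ) - 1) * q - 1) + 2 := by
    push_cast [Nat.cast_sub hδ1]
    ring
  rw [rootT0, tA_one_zero, ← h, Int.toNat_natCast]

lemma tauEven_succ (t : ℕ) :
    tauEven Γ 1 q 0 (t + 1) = tauEven Γ 1 q 0 t + 1 - sdelta Γ + (t / q : ℕ) := by
  simp only [tauEven, sum_range_succ, mul_one, add_zero]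
  push_cast
  ring

lemma tauFun_two_mul (t : ℕ) : tauFun Γ 1 q 0 (2 * t) = tauEven Γ 1 q 0 t := by
  simp [tauFun]

lemma tauFun_two_mul_add_one (t : ℕ) :
    tauFun Γ 1 q 0 (2 * t + 1) = tauEven Γ 1 q 0 (t + 1) + salpha Γ (t / q) := by
  simp [tauFun, show (2 * t + 1) / 2 = t by omega]

lemma tauFun_two_mul_add_two (t : ℕ) :
    tauFun Γ 1 q 0 (2 * t + 2) = tauEven Γ 1 q 0 (t + 1) := by
  rw [← tauFun_two_mul, mul_add, mul_one]

/- With `b = (δ - 1)q` the minimum of `t ↦ τ_0(2t)`, the leaves `b + s` (`s ≤ q + b`) and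
`b - u` (`u ≤ b`) form two chains. The link from `b + s` to `b + s + 1` has the shift
`τ_0(2(b+s+1)) - τ_0(2(b+s))` and a tower whose length is the depth `τ_0(2t+1) - τ_0(2(b+s+1))`,
`t = b + s`, of the outer leaf below the local maximum between the two; likewise on the left. -/
def rightShift (q s : ℕ) : ℕ := s / q

noncomputable def rightLen (Γ : Set ℕ) (q s : ℕ) : ℕ := salpha Γ (sdelta Γ - 1 + s / q)

def leftShift (q u : ℕ) : ℕ := u / q + 1

noncomputable def leftLen (Γ : Set ℕ) (q u : ℕ) : ℕ := salpha Γ (sdelta Γ + u / q)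

/- The grading offsets `2τ_0(2t) + qδ(δ-1)` of the leaves `t = b + s` and `t = b - u`. -/
noncomputable def rightOffset (q s : ℕ) : ℚ := 2 * (∑ j ∈ range s, j / q : ℕ)

noncomputable def leftOffset (q u : ℕ) : ℚ := 2 * (∑ j ∈ range u, (j / q + 1) : ℕ)

lemma rightOffset_succ (s : ℕ) :
    rightOffset q (s + 1) = rightOffset q s + 2 * rightShift q s := by
  simp only [rightOffset, rightShift, sum_range_succ]
  push_cast
  ring

lemma leftOffset_succ (u : ℕ) :
    leftOffset q (u + 1) = leftOffset q u + 2 * leftShift q u := by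
  simp only [leftOffset, leftShift, sum_range_succ]
  push_cast
  ring

variable {Γ q} {b : ℕ} (hq : 1 ≤ q) (hδ1 : 1 ≤ sdelta Γ) (hb : b = (sdelta Γ - 1) * q)

include hq hb

lemma base_add_div (s : ℕ) : (b + s) / q = sdelta Γ - 1 + s / q := by
  rw [hb, add_comm, Nat.add_mul_div_right _ _ (by omega), add_comm]

lemma base_sub_succ_div {u : ℕ} (hu : u < b) : (b - (u + 1)) / q = sdelta Γ - 2 - u / q := by
  obtain ⟨a, r, hr, rfl⟩ : ∃ a r, r < q ∧ u = q * a + r :=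
    ⟨u / q, u % q, Nat.mod_lt _ (by omega), (Nat.div_add_mod u q).symm⟩
  have ha : a < sdelta Γ - 1 := by
    by_contra! h
    rw [hb] at hu
    nlinarith [Nat.mul_le_mul_left q h]
  obtain ⟨c, hc⟩ := Nat.exists_eq_add_of_lt ha
  have hbq : b = q * a + q + q * c := by rw [hb, hc]; ring
  rw [show b - (q * a + r + 1) = q * c + (q - 1 - r) by omega, Nat.mul_add_div (by omega),
    Nat.div_eq_of_lt (by omega), Nat.mul_add_div (by omega), Nat.div_eq_of_lt hr]
  omega

include hδ1

lemma tauEven_base_add (s : ℕ) :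
    tauEven Γ 1 q 0 (b + s) = tauEven Γ 1 q 0 b + (∑ j ∈ range s, j / q : ℕ) := by
  induction s with
  | zero => simp
  | succ s ih =>
    rw [← add_assoc, tauEven_succ, ih, base_add_div hq hb, sum_range_succ, Nat.cast_add]
    generalize ∑ j ∈ range s, j / q = S
    generalize s / q = a
    push_cast [Nat.cast_sub hδ1]
    ring

lemma tauFun_junction_right (s : ℕ) :
    tauFun Γ 1 q 0 (2 * (b + s) + 1) - tauFun Γ 1 q 0 (2 * (b + s))
        = (rightLen Γ q s + rightShift q s : ℕ)
      ∧ tauFun Γ 1 q 0 (2 * (b + s) + 1) - tauFun Γ 1 q 0 (2 * (b + s) + 2)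
        = (rightLen Γ q s : ℕ) := by
  rw [tauFun_two_mul_add_one, tauFun_two_mul, tauFun_two_mul_add_two, tauEven_succ,
    base_add_div hq hb, rightLen, rightShift]
  generalize s / q = a
  constructor <;> push_cast [Nat.cast_sub hδ1] <;> ring

lemma two_mul_tauEven_base :
    2 * tauEven Γ 1 q 0 b + q * sdelta Γ * ((sdelta Γ : ℤ) - 1) = 0 := by
  have hclosed := two_mul_sum_range_div_add_one (show 0 < q by omega) b
  rw [hb, Nat.mul_div_cancel _ (by omega), Nat.mul_mod_left, Nat.sub_add_cancel hδ1, ← hb,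
    sum_add_distrib, sum_const, card_range, smul_eq_mul, mul_one] at hclosed
  have hbZ : (b : ℤ) = (sdelta Γ - 1) * q := by rw [hb]; push_cast [Nat.cast_sub hδ1]; ring
  simp only [tauEven, mul_one, add_zero, ← Nat.cast_sum]
  generalize ∑ j ∈ range b, j / q = S at hclosed ⊢
  zify at hclosed
  linear_combination hclosed - (sdelta Γ : ℤ) * hbZ

lemma rightOffset_eq (s : ℕ) :
    2 * (tauFun Γ 1 q 0 (2 * (b + s)) : ℚ) + q * sdelta Γ * (sdelta Γ - 1) = rightOffset q s := by
  have hbase : 2 * (tauEven Γ 1 q 0 b : ℚ) + q * sdelta Γ * ((sdelta Γ : ℚ) - 1) = 0 := by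
    exact_mod_cast two_mul_tauEven_base hq hδ1 hb
  rw [tauFun_two_mul, tauEven_base_add hq hδ1 hb, rightOffset]
  generalize ∑ j ∈ range s, j / q = S
  push_cast
  linear_combination hbase

lemma tauEven_base_sub_succ {u : ℕ} (hu : u < b) :
    tauEven Γ 1 q 0 (b - (u + 1)) = tauEven Γ 1 q 0 (b - u) + (u / q + 1 : ℕ) := by
  have hdiv : u / q < sdelta Γ - 1 := (Nat.div_lt_iff_lt_mul (by omega)).mpr (hb ▸ hu)
  rw [show b - u = b - (u + 1) + 1 by omega, tauEven_succ, base_sub_succ_div hq hb hu]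
  generalize u / q = a at hdiv
  push_cast [Nat.cast_sub (show a ≤ sdelta Γ - 2 by omega),
    Nat.cast_sub (show 2 ≤ sdelta Γ by omega)]
  ring

lemma leftOffset_eq {u : ℕ} (hu : u ≤ b) :
    2 * (tauFun Γ 1 q 0 (2 * (b - u)) : ℚ) + q * sdelta Γ * (sdelta Γ - 1) = leftOffset q u := by
  induction u with
  | zero =>
    rw [Nat.sub_zero, tauFun_two_mul, leftOffset, sum_range_zero, Nat.cast_zero, mul_zero]
    exact_mod_cast two_mul_tauEven_base hq hδ1 hb
  | succ u ih =>
    rw [leftOffset_succ, ← ih (by omega), tauFun_two_mul, tauFun_two_mul,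
      tauEven_base_sub_succ hq hδ1 hb (by omega), leftShift]
    generalize u / q = a
    push_cast
    ring

variable (hfin : Γᶜ.Finite)
  (hsym : ∀ k : ℕ, k ≤ 2 * sdelta Γ - 1 → (k ∈ Γ ↔ (2 * sdelta Γ - 1 - k) ∉ Γ))

include hfin hsym in
lemma tauFun_junction_left {u : ℕ} (hu : u < b) :
    tauFun Γ 1 q 0 (2 * (b - (u + 1)) + 1) - tauFun Γ 1 q 0 (2 * (b - (u + 1)))
        = (leftLen Γ q u : ℕ)
      ∧ tauFun Γ 1 q 0 (2 * (b - (u + 1)) + 1) - tauFun Γ 1 q 0 (2 * (b - (u + 1)) + 2)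
        = (leftLen Γ q u + leftShift q u : ℕ) := by
  have hdiv : u / q < sdelta Γ - 1 := (Nat.div_lt_iff_lt_mul (by omega)).mpr (hb ▸ hu)
  have hα := salpha_sub_eq hfin hsym hδ1 (u / q + 1) (by omega)
  rw [show sdelta Γ - 1 - (u / q + 1) = sdelta Γ - 2 - u / q by omega,
    show sdelta Γ - 1 + (u / q + 1) = sdelta Γ + u / q by omega] at hα
  rw [tauFun_two_mul_add_one, tauFun_two_mul, tauFun_two_mul_add_two,
    show b - (u + 1) + 1 = b - u by omega, tauEven_base_sub_succ hq hδ1 hb hu,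
    base_sub_succ_div hq hb hu, hα, leftLen, leftShift]
  generalize u / q = a
  constructor <;> push_cast <;> ring

end SurgeryTau

section TowerIndex

variable {q b : ℕ}

/-- Reindexing of the towers of the statement by the links of the right chain (`Fin (q + b)`)
and of the left chain (`Fin b`). -/
def towerIndexEquiv (q b : ℕ) : Fin q ⊕ (Fin b × Fin 2) ≃ Fin (q + b) ⊕ Fin b :=
  (Equiv.sumCongr (Equiv.refl _) ((Equiv.prodComm _ _).trans
      ((finTwoEquiv.prodCongr (Equiv.refl _)).trans (Equiv.boolProdEquivSum _)))).trans
    ((Equiv.sumAssoc _ _ _).symm.trans (Equiv.sumCongr finSumFinEquiv (Equiv.refl _)))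

@[simp]
lemma towerIndexEquiv_inl (j : Fin q) :
    towerIndexEquiv q b (Sum.inl j) = Sum.inl (Fin.castAdd b j) := by
  simp [towerIndexEquiv]

@[simp]
lemma towerIndexEquiv_inr_zero (l : Fin b) :
    towerIndexEquiv q b (Sum.inr (l, 0)) = Sum.inl (Fin.natAdd q l) := by
  simp [towerIndexEquiv, finTwoEquiv, Equiv.sumAssoc]

@[simp]
lemma towerIndexEquiv_inr_one (l : Fin b) :
    towerIndexEquiv q b (Sum.inr (l, 1)) = Sum.inr l := by
  simp [towerIndexEquiv, finTwoEquiv, Equiv.sumAssoc]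

variable (q b) in
def towerPos (i : Fin q ⊕ (Fin b × Fin 2)) : ℕ ⊕ ℕ :=
  Sum.map Fin.val Fin.val (towerIndexEquiv q b i)

lemma towerPos_symm (k : Fin (q + b) ⊕ Fin b) :
    towerPos q b ((towerIndexEquiv q b).symm k) = Sum.map Fin.val Fin.val k := by
  simp [towerPos]

lemma forall_towerPos_iff {P : ℕ ⊕ ℕ → Prop} :
    (∀ i, P (towerPos q b i)) ↔ (∀ s < q + b, P (Sum.inl s)) ∧ ∀ u < b, P (Sum.inr u) := by
  rw [← (towerIndexEquiv q b).symm.forall_congr_right]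
  simp only [towerPos_symm, Sum.forall, Sum.map_inl, Sum.map_inr, Fin.forall_iff]

lemma towerPos_cases (i : Fin q ⊕ (Fin b × Fin 2)) :
    (∃ s < q + b, towerPos q b i = Sum.inl s) ∨ ∃ u < b, towerPos q b i = Sum.inr u := by
  revert i
  rw [forall_towerPos_iff (P := fun k => (∃ s < q + b, k = Sum.inl s) ∨ ∃ u < b, k = Sum.inr u)]
  exact ⟨fun s hs => Or.inl ⟨s, hs, rfl⟩, fun u hu => Or.inr ⟨u, hu, rfl⟩⟩

end TowerIndex

section Decomposition

open Finset

variable (Γ : Set ℕ) (q b : ℕ)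

noncomputable abbrev towerLen : Fin q ⊕ (Fin b × Fin 2) → ℕ :=
  Sum.elim (fun _ => salpha Γ (sdelta Γ - 1))
    (fun x => salpha Γ (sdelta Γ - 1 + (x.1.val + 1 + q - 1) / q))

abbrev towerOffset : Fin q ⊕ (Fin b × Fin 2) → ℚ :=
  Sum.elim (fun _ => 0)
    (fun x => ((((x.1.val + 1) / q + 1 : ℕ) : ℚ) * (((x.1.val + 1) % q + (x.1.val + 1) : ℕ) : ℚ)))

/-- The tower components of a tuple of leaf values, indexed by the links `Sum.inl s` of the right
chain and `Sum.inr u` of the left chain. -/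
noncomputable def towerPart (f : ℕ → TPlus) : ℕ ⊕ ℕ → TPlus :=
  Sum.elim (chainDiff (rightShift q) (fun s => f (b + s)))
    (chainDiff (leftShift q) (fun u => f (b - u)))

noncomputable def glueChains (x : TPlus) (yR yL : ℕ → TPlus) (t : ℕ) : TPlus :=
  if t < b then chainRec (leftShift q) yL x (b - t) else chainRec (rightShift q) yR x (t - b)

variable {Γ q b}

lemma towerPart_shiftU (f : ℕ → TPlus) (k : ℕ ⊕ ℕ) :
    towerPart q b (fun t => shiftU (f t)) k = shiftU (towerPart q b f k) := by
  rcases k with s | u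
  · exact chainDiff_shiftU (fun s => f (b + s)) s
  · exact chainDiff_shiftU (fun u => f (b - u)) u

lemma towerPart_add (f g : ℕ → TPlus) (k : ℕ ⊕ ℕ) :
    towerPart q b (f + g) k = towerPart q b f k + towerPart q b g k := by
  rcases k with s | u <;> simp only [towerPart, Sum.elim_inl, Sum.elim_inr, chainDiff,
    Pi.add_apply, map_add] <;> abel

lemma towerPart_smul (c : ℤ) (f : ℕ → TPlus) (k : ℕ ⊕ ℕ) :
    towerPart q b (c • f) k = c • towerPart q b f k := by
  rcases k with s | u <;> simp only [towerPart, Sum.elim_inl, Sum.elim_inr, chainDiff,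
    Pi.smul_apply, map_smul, smul_sub]

lemma towerPart_congr {f g : ℕ → TPlus} (hfg : ∀ t ≤ b + (q + b), f t = g t)
    (i : Fin q ⊕ (Fin b × Fin 2)) :
    towerPart q b f (towerPos q b i) = towerPart q b g (towerPos q b i) := by
  revert i
  refine (forall_towerPos_iff (P := fun k => towerPart q b f k = towerPart q b g k)).mpr
    ⟨fun s hs => ?_, fun u hu => ?_⟩
  · exact chainDiff_congr (f := fun s => f (b + s)) (g := fun s => g (b + s))
      (hfg _ (by omega)) (hfg _ (by omega))
  · exact chainDiff_congr (f := fun u => f (b - u)) (g := fun u => g (b - u))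
      (hfg _ (by omega)) (hfg _ (by omega))

lemma glueChains_add (x : TPlus) (yR yL : ℕ → TPlus) (s : ℕ) :
    glueChains q b x yR yL (b + s) = chainRec (rightShift q) yR x s := by
  simp [glueChains]

lemma glueChains_sub (x : TPlus) (yR yL : ℕ → TPlus) {u : ℕ} (hu : u ≤ b) :
    glueChains q b x yR yL (b - u) = chainRec (leftShift q) yL x u := by
  rcases u.eq_zero_or_pos with rfl | hu0
  · simp [glueChains, chainRec]
  · simp [glueChains, show b - u < b by omega, show b - (b - u) = u by omega]

lemma towerPart_glueChains_inl (x : TPlus) (yR yL : ℕ → TPlus) (s : ℕ) :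
    towerPart q b (glueChains q b x yR yL) (Sum.inl s) = yR s := by
  simp only [towerPart, Sum.elim_inl, glueChains_add, chainDiff_chainRec]

lemma towerPart_glueChains_inr (x : TPlus) (yR yL : ℕ → TPlus) {u : ℕ} (hu : u < b) :
    towerPart q b (glueChains q b x yR yL) (Sum.inr u) = yL u := by
  simp only [towerPart, Sum.elim_inr]
  rw [chainDiff_congr (glueChains_sub x yR yL hu.le) (glueChains_sub x yR yL hu),
    chainDiff_chainRec]

lemma glueChains_towerPart (f : ℕ → TPlus) {yR yL : ℕ → TPlus}
    (hyR : ∀ s < q + b, yR s = towerPart q b f (Sum.inl s))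
    (hyL : ∀ u < b, yL u = towerPart q b f (Sum.inr u)) :
    ∀ t ≤ b + (q + b), glueChains q b (f b) yR yL t = f t := by
  refine forall_le_add_iff_split.mpr ⟨fun s hs => ?_, fun u hu => ?_⟩
  · rw [glueChains_add]
    exact chainRec_chainDiff (f := fun s => f (b + s)) hyR s hs
  · rw [glueChains_sub _ _ _ hu]
    exact chainRec_chainDiff (f := fun u => f (b - u)) hyL u hu

noncomputable def rightData (Y : (i : Fin q ⊕ (Fin b × Fin 2)) → Tower (towerLen Γ q b i))
    (s : ℕ) : TPlus :=
  if h : s < q + b then Y ((towerIndexEquiv q b).symm (Sum.inl ⟨s, h⟩)) else 0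

noncomputable def leftData (Y : (i : Fin q ⊕ (Fin b × Fin 2)) → Tower (towerLen Γ q b i))
    (u : ℕ) : TPlus :=
  if h : u < b then Y ((towerIndexEquiv q b).symm (Sum.inr ⟨u, h⟩)) else 0

lemma elim_rightData_leftData (Y : (i : Fin q ⊕ (Fin b × Fin 2)) → Tower (towerLen Γ q b i))
    (i : Fin q ⊕ (Fin b × Fin 2)) :
    Sum.elim (rightData Y) (leftData Y) (towerPos q b i) = Y i := by
  obtain ⟨k, rfl⟩ := (towerIndexEquiv q b).symm.surjective i
  rcases k with ⟨s, hs⟩ | ⟨u, hu⟩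
  · simp [towerPos_symm, rightData, hs]
  · simp [towerPos_symm, leftData, hu]

variable (hq : 1 ≤ q) (hδ1 : 1 ≤ sdelta Γ)

include hq hδ1 in
lemma towerLen_eq (i : Fin q ⊕ (Fin b × Fin 2)) :
    towerLen Γ q b i = Sum.elim (rightLen Γ q) (leftLen Γ q) (towerPos q b i) := by
  rcases i with j | ⟨l, ε⟩
  · simp [towerPos, rightLen, Nat.div_eq_of_lt j.2]
  · have h1 : (l.val + q) / q = l.val / q + 1 := Nat.add_div_right _ (by omega)
    have h2 : (q + l.val) / q = l.val / q + 1 := by rw [add_comm, h1]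
    fin_cases ε
    · simp [towerPos, rightLen, h1, h2]
    · simp [towerPos, leftLen, h1, show sdelta Γ - 1 + (l.val / q + 1) = sdelta Γ + l.val / q
        by omega]

include hq in
lemma leftOffset_eq_mul (n : ℕ) :
    leftOffset q n = ((n / q + 1 : ℕ) : ℚ) * ((n % q + n : ℕ) : ℚ) := by
  rw [leftOffset, ← Nat.cast_ofNat, ← Nat.cast_mul, two_mul_sum_range_div_add_one (by omega),
    Nat.cast_mul]

include hq in
lemma towerOffset_eq (i : Fin q ⊕ (Fin b × Fin 2)) :
    towerOffset q b i = Sum.elim (fun s => rightOffset q (s + 1)) (fun u => leftOffset q (u + 1))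
      (towerPos q b i) := by
  rcases i with j | ⟨l, ε⟩
  · have : ∑ i ∈ range (j.val + 1), i / q = 0 :=
      sum_eq_zero fun i hi => Nat.div_eq_of_lt (by simp at hi; omega)
    simp only [towerPos, towerIndexEquiv_inl, Sum.map_inl, Sum.elim_inl, Fin.val_castAdd,
      rightOffset, this, Nat.cast_zero, mul_zero]
  · fin_cases ε
    · simp only [towerPos, Fin.zero_eta, towerIndexEquiv_inr_zero, Sum.map_inl, Sum.elim_inl,
        Sum.elim_inr, rightOffset, Fin.val_natAdd, add_assoc, sum_range_add_div q _ (by omega)]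
      exact (leftOffset_eq_mul hq _).symm
    · simp only [towerPos, Fin.mk_one, towerIndexEquiv_inr_one, Sum.map_inr, Sum.elim_inr]
      exact (leftOffset_eq_mul hq _).symm

end Decomposition

section Equivalence

open Finset

variable {Γ : Set ℕ} {q b : ℕ} (hq : 1 ≤ q) (hδ1 : 1 ≤ sdelta Γ) (hb : b = (sdelta Γ - 1) * q)
  (hfin : Γᶜ.Finite)
  (hsym : ∀ k : ℕ, k ≤ 2 * sdelta Γ - 1 → (k ∈ Γ ↔ (2 * sdelta Γ - 1 - k) ∉ Γ))

include hq hδ1 hb hfin hsym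

lemma tauFun_zigzag : ∀ t < b + (q + b), tauFun Γ 1 q 0 (2 * t) ≤ tauFun Γ 1 q 0 (2 * t + 1)
    ∧ tauFun Γ 1 q 0 (2 * t + 2) ≤ tauFun Γ 1 q 0 (2 * t + 1) := by
  refine forall_lt_add_iff_split.mpr ⟨fun s _ => ?_, fun u hu => ?_⟩
  · obtain ⟨h1, h2⟩ := tauFun_junction_right hq hδ1 hb s
    omega
  · obtain ⟨h1, h2⟩ := tauFun_junction_left hq hδ1 hb hfin hsym hu
    omega

lemma leafCompat_iff_towerPart_mem (f : ℕ → TPlus) :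
    LeafCompat (tauFun Γ 1 q 0) (b + (q + b)) f ↔
      (∀ s < q + b, towerPart q b f (Sum.inl s) ∈ Tower (rightLen Γ q s)) ∧
      ∀ u < b, towerPart q b f (Sum.inr u) ∈ Tower (leftLen Γ q u) := by
  refine forall_lt_add_iff_split.trans (and_congr (forall₂_congr fun s _ => ?_)
    (forall₂_congr fun u hu => ?_))
  · obtain ⟨hE, hF⟩ := tauFun_junction_right hq hδ1 hb s
    rw [hE, hF, Int.toNat_natCast, Int.toNat_natCast, towerPart, Sum.elim_inl, chainDiff,
      sub_shiftU_pow_mem_Tower_iff]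
    rfl
  · obtain ⟨hE, hF⟩ := tauFun_junction_left hq hδ1 hb hfin hsym hu
    rw [hE, hF, Int.toNat_natCast, Int.toNat_natCast, towerPart, Sum.elim_inr, chainDiff,
      sub_shiftU_pow_mem_Tower_iff, show b - (u + 1) + 1 = b - u by omega, eq_comm]

lemma towerPart_mem {f : ℕ → TPlus} (hf : LeafCompat (tauFun Γ 1 q 0) (b + (q + b)) f)
    (i : Fin q ⊕ (Fin b × Fin 2)) :
    towerPart q b f (towerPos q b i) ∈ Tower (towerLen Γ q b i) := by
  rw [towerLen_eq hq hδ1]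
  revert i
  exact (forall_towerPos_iff (P := fun k =>
    towerPart q b f k ∈ Tower (Sum.elim (rightLen Γ q) (leftLen Γ q) k))).mpr
    ((leafCompat_iff_towerPart_mem hq hδ1 hb hfin hsym f).mp hf)

variable {T : ℕ} (hT : T = 2 * (b + (q + b)))

local notation "ℍ" => Hmod (rootAdj T (tauFun Γ 1 q 0)) (rootχ T (tauFun Γ 1 q 0))

lemma leafCompat_glueChains (x : TPlus)
    (Y : (i : Fin q ⊕ (Fin b × Fin 2)) → Tower (towerLen Γ q b i)) :
    LeafCompat (tauFun Γ 1 q 0) (b + (q + b)) (glueChains q b x (rightData Y) (leftData Y)) := by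
  have hmem (i : Fin q ⊕ (Fin b × Fin 2)) :
      Sum.elim (rightData Y) (leftData Y) (towerPos q b i)
        ∈ Tower (Sum.elim (rightLen Γ q) (leftLen Γ q) (towerPos q b i)) := by
    rw [elim_rightData_leftData, ← towerLen_eq hq hδ1]
    exact (Y i).2
  obtain ⟨hR, hL⟩ := (forall_towerPos_iff (P := fun k =>
    Sum.elim (rightData Y) (leftData Y) k ∈ Tower (Sum.elim (rightLen Γ q) (leftLen Γ q) k))).mp
    hmem
  refine (leafCompat_iff_towerPart_mem hq hδ1 hb hfin hsym _).mpr ⟨fun s hs => ?_, fun u hu => ?_⟩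
  · rw [towerPart_glueChains_inl]
    exact hR s hs
  · rw [towerPart_glueChains_inr _ _ _ hu]
    exact hL u hu

noncomputable def toTowers (φ : ℍ) : Targ (towerLen Γ q b) :=
  (leafVal T _ b φ.1, fun i => ⟨towerPart q b (fun t => leafVal T _ t φ.1) (towerPos q b i),
    towerPart_mem hq hδ1 hb hfin hsym
      (leafCompat_leafVal hT (tauFun_zigzag hq hδ1 hb hfin hsym) φ.2) i⟩)

noncomputable def fromTowers (z : Targ (towerLen Γ q b)) : ℍ :=
  ⟨ofLeaves hT (tauFun_zigzag hq hδ1 hb hfin hsym) _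
      (leafCompat_glueChains hq hδ1 hb hfin hsym z.1 z.2),
    ofLeaves_mem _ _ _ _⟩

lemma leafVal_fromTowers (z : Targ (towerLen Γ q b)) {t : ℕ} (ht : t ≤ b + (q + b)) :
    leafVal T _ t (fromTowers hq hδ1 hb hfin hsym hT z).1
      = glueChains q b z.1 (rightData z.2) (leftData z.2) t :=
  leafVal_ofLeaves hT (tauFun_zigzag hq hδ1 hb hfin hsym) _
    (leafCompat_glueChains hq hδ1 hb hfin hsym z.1 z.2) ht

noncomputable def towerEquiv : ℍ ≃ₗ[ℤ] Targ (towerLen Γ q b) where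
  toFun := toTowers hq hδ1 hb hfin hsym hT
  invFun := fromTowers hq hδ1 hb hfin hsym hT
  map_add' φ ψ := Prod.ext (map_add _ _ _) <| funext fun i => Subtype.ext <| by
    simp only [toTowers, Submodule.coe_add, map_add]
    exact towerPart_add _ _ _
  map_smul' c φ := Prod.ext (map_smul _ _ _) <| funext fun i => Subtype.ext <| by
    simp only [toTowers, Submodule.coe_smul, map_smul]
    exact towerPart_smul _ _ _
  left_inv φ := Subtype.ext <| Hmod_ext_leafVal hT (tauFun_zigzag hq hδ1 hb hfin hsym)
    (fromTowers hq hδ1 hb hfin hsym hT _).2 φ.2 fun t ht => by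
      rw [leafVal_fromTowers hq hδ1 hb hfin hsym hT _ ht]
      refine glueChains_towerPart (fun t => leafVal T _ t φ.1) (fun s hs => ?_) (fun u hu => ?_)
        t ht
      · simp only [rightData, dif_pos hs, toTowers, towerPos_symm, Sum.map_inl]
      · simp only [leftData, dif_pos hu, toTowers, towerPos_symm, Sum.map_inr]
  right_inv z := by
    refine Prod.ext ?_ (funext fun i => Subtype.ext ?_)
    · show leafVal T _ b (fromTowers hq hδ1 hb hfin hsym hT z).1 = z.1
      rw [leafVal_fromTowers _ _ _ _ _ _ _ (by omega)]
      simp [glueChains, chainRec]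
    · show towerPart q b (fun t => leafVal T _ t (fromTowers hq hδ1 hb hfin hsym hT z).1)
        (towerPos q b i) = z.2 i
      rw [towerPart_congr (fun t ht => leafVal_fromTowers hq hδ1 hb hfin hsym hT z ht),
        ← elim_rightData_leftData z.2 i]
      rcases towerPos_cases i with ⟨s, hs, h⟩ | ⟨u, hu, h⟩ <;> rw [h]
      · exact towerPart_glueChains_inl _ _ _ _
      · exact towerPart_glueChains_inr _ _ _ hu

lemma towerEquiv_apply (φ : ℍ) :
    towerEquiv hq hδ1 hb hfin hsym hT φ = toTowers hq hδ1 hb hfin hsym hT φ := rfl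

lemma towerEquiv_HU (φ : ℍ) :
    towerEquiv hq hδ1 hb hfin hsym hT (HU _ _ φ)
      = TargU (towerLen Γ q b) (towerEquiv hq hδ1 hb hfin hsym hT φ) := by
  rw [towerEquiv_apply, towerEquiv_apply]
  refine Prod.ext (leafVal_shiftU _ _) (funext fun i => Subtype.ext ?_)
  show towerPart q b (fun t => leafVal T _ t (fun v => shiftU (φ.1 v))) (towerPos q b i)
    = shiftU (towerPart q b (fun t => leafVal T _ t φ.1) (towerPos q b i))
  simp only [leafVal_shiftU]
  exact towerPart_shiftU _ _

lemma HHomog_iff_TargHomog (d : ℚ) (φ : ℍ) :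
    HHomog (rootχ T (tauFun Γ 1 q 0)) (q * sdelta Γ * (sdelta Γ - 1)) d φ.1
      ↔ TargHomog 0 (towerOffset q b) d (towerEquiv hq hδ1 hb hfin hsym hT φ) := by
  set f := fun t => leafVal T (tauFun Γ 1 q 0) t φ.1
  have hright : (∀ s ≤ q + b, THomog (2 * (tauFun Γ 1 q 0 (2 * (b + s)) : ℚ)
      + q * sdelta Γ * (sdelta Γ - 1)) d (f (b + s)))
      ↔ ∀ s ≤ q + b, THomog (rightOffset q s) d (f (b + s)) :=
    forall₂_congr fun s _ => by rw [rightOffset_eq hq hδ1 hb]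
  have hleft : (∀ u ≤ b, THomog (2 * (tauFun Γ 1 q 0 (2 * (b - u)) : ℚ)
      + q * sdelta Γ * (sdelta Γ - 1)) d (f (b - u)))
      ↔ ∀ u ≤ b, THomog (leftOffset q u) d (f (b - u)) :=
    forall₂_congr fun u hu => by rw [leftOffset_eq hq hδ1 hb hu]
  have htowers : TargHomog 0 (towerOffset q b) d (towerEquiv hq hδ1 hb hfin hsym hT φ)
      ↔ THomog 0 d (f b) ∧ ∀ i, THomog (Sum.elim (fun s => rightOffset q (s + 1))
          (fun u => leftOffset q (u + 1)) (towerPos q b i)) d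
          (towerPart q b f (towerPos q b i)) := by
    rw [towerEquiv_apply, TargHomog]
    simp only [towerOffset_eq hq]
    exact Iff.rfl
  rw [HHomog_iff_leafVal hT (tauFun_zigzag hq hδ1 hb hfin hsym) φ.2, forall_le_add_iff_split,
    hright, hleft, THomog_chain_iff (rightOffset_succ q), THomog_chain_iff (leftOffset_succ q),
    htowers,
    forall_towerPos_iff (P := fun k => THomog (Sum.elim (fun s => rightOffset q (s + 1))
      (fun u => leftOffset q (u + 1)) k) d (towerPart q b f k))]
  simp only [rightOffset, leftOffset, range_zero, sum_empty, Nat.cast_zero, mul_zero, add_zero,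
    Nat.sub_zero, Sum.elim_inl, Sum.elim_inr, towerPart]
  tauto

end Equivalence

theorem HF_of_minus_one_over_q_surgery_general
    (Γ : Set ℕ)
    (hfin : Γᶜ.Finite) (hδ1 : 1 ≤ sdelta Γ)
    (hsym : ∀ k : ℕ, k ≤ 2 * sdelta Γ - 1 → (k ∈ Γ ↔ (2 * sdelta Γ - 1 - k) ∉ Γ))
    (q : ℕ) (hq : 1 ≤ q)
    (τ : ℕ → ℤ) (hτ : τ = tauFun Γ 1 q 0)
    (T : ℕ) (hT : T = rootT0 Γ 1 q 0) :
    tA Γ 1 q 0 = (2 * (sdelta Γ : ℤ) - 1) * (q : ℤ) - 1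
      ∧ ∃ e : Hmod (rootAdj T τ) (rootχ T τ) ≃ₗ[ℤ]
            Targ (Sum.elim (fun _ : Fin q => salpha Γ (sdelta Γ - 1))
              (fun x : Fin ((sdelta Γ - 1) * q) × Fin 2 =>
                salpha Γ (sdelta Γ - 1 + (x.1.val + 1 + q - 1) / q))),
          (∀ φ, e (HU (rootAdj T τ) (rootχ T τ) φ)
              = TargU (Sum.elim (fun _ : Fin q => salpha Γ (sdelta Γ - 1))
                  (fun x : Fin ((sdelta Γ - 1) * q) × Fin 2 =>
                    salpha Γ (sdelta Γ - 1 + (x.1.val + 1 + q - 1) / q)))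
                  (e φ))
          ∧ (∀ (d : ℚ) (φ : Hmod (rootAdj T τ) (rootχ T τ)),
              HHomog (rootχ T τ)
                  ((q : ℚ) * (sdelta Γ : ℚ) * ((sdelta Γ : ℚ) - 1)) d φ.1
                ↔ TargHomog 0
                    (Sum.elim (fun _ : Fin q => (0 : ℚ))
                      (fun x : Fin ((sdelta Γ - 1) * q) × Fin 2 =>
                        ((((x.1.val + 1) / q + 1 : ℕ) : ℚ)
                          * (((x.1.val + 1) % q + (x.1.val + 1) : ℕ) : ℚ))))
                    d (e φ)) := by
  subst hτ
  have hT' := hT.trans (rootT0_one_zero Γ q hδ1)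
  exact ⟨tA_one_zero Γ q, towerEquiv hq hδ1 rfl hfin hsym hT',
    towerEquiv_HU hq hδ1 rfl hfin hsym hT', HHomog_iff_TargHomog hq hδ1 rfl hfin hsym hT'⟩

/-- (Example 8.2 of the paper: `p = 1`, i.e. `(−1/q)`-surgery.)
With `t_0 = (2δ−1)q − 1` and `r_0 = qδ(δ−1)`, there is an isomorphism of
graded `ℤ[U]`-modules
`ℍ(R_{τ_0},χ_{τ_0})[qδ(δ−1)] ≅ T⁺_0 ⊕ T_0(α_{δ−1})^{⊕q} ⊕
  ⊕_{l=1}^{(δ−1)q} T_{(⌊l/q⌋+1)((l mod q)+l)}(α_{δ−1+⌈l/q⌉})^{⊕2}`. -/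
theorem HF_of_minus_one_over_q_surgery
    (Γ : Set ℕ)
    (h0 : 0 ∈ Γ) (hadd : ∀ x ∈ Γ, ∀ y ∈ Γ, x + y ∈ Γ)
    (hfin : Γᶜ.Finite) (hδ1 : 1 ≤ sdelta Γ)
    (hsym : ∀ k : ℕ, k ≤ 2 * sdelta Γ - 1 → (k ∈ Γ ↔ (2 * sdelta Γ - 1 - k) ∉ Γ))
    (q : ℕ) (hq : 1 ≤ q)
    (τ : ℕ → ℤ) (hτ : τ = tauFun Γ 1 q 0)
    (T : ℕ) (hT : T = rootT0 Γ 1 q 0) :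
    tA Γ 1 q 0 = (2 * (sdelta Γ : ℤ) - 1) * (q : ℤ) - 1
      ∧ ∃ e : Hmod (rootAdj T τ) (rootχ T τ) ≃ₗ[ℤ]
            Targ (Sum.elim (fun _ : Fin q => salpha Γ (sdelta Γ - 1))
              (fun x : Fin ((sdelta Γ - 1) * q) × Fin 2 =>
                salpha Γ (sdelta Γ - 1 + (x.1.val + 1 + q - 1) / q))),
          (∀ φ, e (HU (rootAdj T τ) (rootχ T τ) φ)
              = TargU (Sum.elim (fun _ : Fin q => salpha Γ (sdelta Γ - 1))
                  (fun x : Fin ((sdelta Γ - 1) * q) × Fin 2 =>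
                    salpha Γ (sdelta Γ - 1 + (x.1.val + 1 + q - 1) / q)))
                  (e φ))
          ∧ (∀ (d : ℚ) (φ : Hmod (rootAdj T τ) (rootχ T τ)),
              HHomog (rootχ T τ)
                  ((q : ℚ) * (sdelta Γ : ℚ) * ((sdelta Γ : ℚ) - 1)) d φ.1
                ↔ TargHomog 0
                    (Sum.elim (fun _ : Fin q => (0 : ℚ))
                      (fun x : Fin ((sdelta Γ - 1) * q) × Fin 2 =>
                        ((((x.1.val + 1) / q + 1 : ℕ) : ℚ)
                          * (((x.1.val + 1) % q + (x.1.val + 1) : ℕ) : ℚ))))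
                    d (e φ)) :=
  HF_of_minus_one_over_q_surgery_general Γ hfin hδ1 hsym q hq τ hτ T hT
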